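/- arXiv:1710.04023 — 3 statements merged into one kernel-verified Lean document; each statement's English description precedes it below -/
import Mathlib

section
/- Let Φ_K : ℝ → ℝ be supported on [-1,1] with |Φ_K(t)| ≤ C_s |t|^s for all t ∈ [-1,1], and let Φ_X be the characteristic function of a density f satisfying ∫_ℝ |Φ_X(t)|² |t|^{2s} dt ≤ R². Then for every h > 0, |h ∫_{-1/h}^{1/h} Φ_K(h t) Φ_X(t) dt| ≤ √2 · C_s · R · h^{s+1/2}. -/
/-!
On the window `|t| ≤ 1/h` the kernel bound gives `|Φ_K(ht)| ≤ C_s h^s |t|^s`, so the integrand is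
dominated by `C_s h^s · |t|^s |Φ_X(t)|`, and Cauchy–Schwarz against the constant `1` on an interval
of length `2/h` bounds the integral of `|t|^s |Φ_X(t)|` there by `√(2/h) · R`.
-/

open MeasureTheory Real

theorem integral_le_sqrt_measureReal_univ_mul_sqrt_integral_sq {α : Type*} [MeasurableSpace α]
    {μ : Measure α} [IsFiniteMeasure μ] {g : α → ℝ} (hg_nonneg : 0 ≤ᵐ[μ] g) (hg : MemLp g 2 μ) :
    ∫ x, g x ∂μ ≤ √(μ.real Set.univ) * √(∫ x, g x ^ 2 ∂μ) := by
  have h := integral_mul_le_Lp_mul_Lq_of_nonneg .two_two (.of_forall fun _ => zero_le_one)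
    hg_nonneg (by simpa using memLp_const (1 : ℝ)) (by simpa using hg)
  simpa [sqrt_eq_rpow] using h

theorem setIntegral_le_sqrt_measureReal_mul_of_integral_sq_le {α : Type*} [MeasurableSpace α]
    {μ : Measure α} {s : Set α} (hs : μ s ≠ ⊤) {g : α → ℝ} {R : ℝ} (hg_nonneg : 0 ≤ g)
    (hg : MemLp g 2 μ) (hR : 0 ≤ R) (hg_sq : ∫ x, g x ^ 2 ∂μ ≤ R ^ 2) :
    ∫ x in s, g x ∂μ ≤ √(μ.real s) * R := by
  have : IsFiniteMeasure (μ.restrict s) := isFiniteMeasure_restrict.2 hs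
  calc ∫ x in s, g x ∂μ ≤ √((μ.restrict s).real Set.univ) * √(∫ x in s, g x ^ 2 ∂μ) :=
        integral_le_sqrt_measureReal_univ_mul_sqrt_integral_sq (.of_forall hg_nonneg) (hg.restrict s)
    _ ≤ √(μ.real s) * √(R ^ 2) := by
        rw [measureReal_restrict_apply_univ]
        gcongr
        exact (setIntegral_le_integral hg.integrable_sq (.of_forall fun x => by positivity)).trans
          hg_sq
    _ = √(μ.real s) * R := by rw [sqrt_sq hR]

theorem abs_comp_mul_le_of_abs_le_rpow {Φ : ℝ → ℝ} {C s h t : ℝ}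
    (hΦ : ∀ u ∈ Set.Icc (-1 : ℝ) 1, |Φ u| ≤ C * |u| ^ s) (hh : 0 < h)
    (ht : t ∈ Set.Icc (-(1 / h)) (1 / h)) : |Φ (h * t)| ≤ C * h ^ s * |t| ^ s := by
  have hht : h * t ∈ Set.Icc (-1 : ℝ) 1 := by
    rw [Set.mem_Icc, ← abs_le, abs_mul, abs_of_pos hh, mul_comm]
    exact (le_div_iff₀ hh).1 (abs_le.2 ht)
  simpa only [abs_mul, abs_of_pos hh, mul_rpow hh.le (abs_nonneg t), mul_assoc] using hΦ _ hht

theorem bias_bound_atomic_deconvolution_general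
    (s R Cs : ℝ) (hR : 0 < R) (hCs : 0 < Cs)
    (ΦK : ℝ → ℝ)
    (hKbound : ∀ t ∈ Set.Icc (-1 : ℝ) 1, |ΦK t| ≤ Cs * |t| ^ s)
    (ΦX : ℝ → ℂ) (hXmeas : Measurable ΦX)
    (hXint : Integrable (fun t => ‖ΦX t‖ ^ 2 * |t| ^ (2 * s)))
    (hXbound : ∫ t : ℝ, ‖ΦX t‖ ^ 2 * |t| ^ (2 * s) ≤ R ^ 2) :
    ∀ h : ℝ, 0 < h →
      Integrable (fun t => (ΦK (h * t) : ℂ) * ΦX t)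
        (Measure.restrict volume (Set.Icc (-(1 / h)) (1 / h))) →
      ‖(h : ℂ) * ∫ t in Set.Icc (-(1 / h)) (1 / h), (ΦK (h * t) : ℂ) * ΦX t‖
        ≤ Real.sqrt 2 * Cs * R * h ^ (s + 1 / 2) := by
  intro h hh _
  set I := Set.Icc (-(1 / h)) (1 / h)
  set G : ℝ → ℝ := fun t => ‖ΦX t‖ * |t| ^ s
  have hG_sq : (fun t => G t ^ 2) = fun t => ‖ΦX t‖ ^ 2 * |t| ^ (2 * s) := by
    ext t
    rw [mul_pow, mul_comm 2 s, rpow_mul (abs_nonneg t), rpow_two]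
  have hG : MemLp G 2 volume := (memLp_two_iff_integrable_sq (by fun_prop)).2 (hG_sq ▸ hXint)
  have hvol : volume.real I = 2 / h := by
    rw [Real.volume_real_Icc_of_le (by linarith [one_div_pos.2 hh])]
    ring
  have hGI : ∫ t in I, G t ≤ √(2 / h) * R := hvol ▸
    setIntegral_le_sqrt_measureReal_mul_of_integral_sq_le measure_Icc_lt_top.ne
      (fun t => by positivity) hG hR.le (hG_sq ▸ hXbound)
  have hK : ∀ t ∈ I, ‖(ΦK (h * t) : ℂ) * ΦX t‖ ≤ Cs * h ^ s * G t := fun t ht => calc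
    ‖(ΦK (h * t) : ℂ) * ΦX t‖ = |ΦK (h * t)| * ‖ΦX t‖ := by
      rw [norm_mul, Complex.norm_real, norm_eq_abs]
    _ ≤ Cs * h ^ s * |t| ^ s * ‖ΦX t‖ := by
      gcongr
      exact abs_comp_mul_le_of_abs_le_rpow hKbound hh ht
    _ = Cs * h ^ s * G t := by ring
  calc ‖(h : ℂ) * ∫ t in I, (ΦK (h * t) : ℂ) * ΦX t‖
      = h * ‖∫ t in I, (ΦK (h * t) : ℂ) * ΦX t‖ := by
        rw [norm_mul, Complex.norm_real, norm_of_nonneg hh.le]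
    _ ≤ h * ∫ t in I, Cs * h ^ s * G t := by
        gcongr
        exact norm_integral_le_of_norm_le (((hG.restrict I).integrable one_le_two).const_mul _)
          (ae_restrict_of_forall_mem measurableSet_Icc hK)
    _ = h * (Cs * h ^ s) * ∫ t in I, G t := by rw [integral_const_mul]; ring
    _ ≤ h * (Cs * h ^ s) * (√(2 / h) * R) := by gcongr
    _ = √2 * Cs * R * h ^ (s + 1 / 2) := by
        rw [rpow_add hh, ← sqrt_eq_rpow, sqrt_div' _ hh.le]
        nth_rewrite 1 [← mul_self_sqrt hh.le]
        field_simp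

/-- Bias bound: if `Φ_K` is supported on `[-1,1]` with `|Φ_K t| ≤ C_s |t|^s`
there, and `∫ |Φ_X(t)|² |t|^{2s} dt ≤ R²`, then for all `h > 0`,
`|h ∫_{-1/h}^{1/h} Φ_K(ht) Φ_X(t) dt| ≤ √2 · C_s · R · h^{s+1/2}`. -/
theorem bias_bound_atomic_deconvolution
    (s R Cs : ℝ) (hs : 0 < s) (hR : 0 < R) (hCs : 0 < Cs)
    (ΦK : ℝ → ℝ) (hKmeas : Measurable ΦK)
    (hKsupp : ∀ t : ℝ, t ∉ Set.Icc (-1 : ℝ) 1 → ΦK t = 0)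
    (hKbound : ∀ t ∈ Set.Icc (-1 : ℝ) 1, |ΦK t| ≤ Cs * |t| ^ s)
    (ΦX : ℝ → ℂ) (hXmeas : Measurable ΦX)
    (hXint : Integrable (fun t => ‖ΦX t‖ ^ 2 * |t| ^ (2 * s)))
    (hXbound : ∫ t : ℝ, ‖ΦX t‖ ^ 2 * |t| ^ (2 * s) ≤ R ^ 2) :
    ∀ h : ℝ, 0 < h →
      Integrable (fun t => (ΦK (h * t) : ℂ) * ΦX t)
        (Measure.restrict volume (Set.Icc (-(1 / h)) (1 / h))) →
      ‖(h : ℂ) * ∫ t in Set.Icc (-(1 / h)) (1 / h), (ΦK (h * t) : ℂ) * ΦX t‖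
        ≤ Real.sqrt 2 * Cs * R * h ^ (s + 1 / 2) :=
  bias_bound_atomic_deconvolution_general s R Cs hR hCs ΦK hKbound ΦX hXmeas hXint hXbound
end

section
/- Let (p̂_j)_{0≤j≤k} be real numbers in [0,1], p ∈ [0,1], and (κ_j)_{0≤j≤k} positive reals increasing in j. Define ĵ := min{j : ∀ l > j, |p̂_j - p̂_l| < κ_l} and fix j* ≤ k. Then the event {ĵ > j*} is contained in the union over l ≥ j* of the events {|p̂_l - p| ≥ κ_l/2}. -/
/-- Combinatorial core of the Lepskii rule: if
`ĵ = min{j : ∀ l > j (l ≤ k), |p̂_j - p̂_l| < κ_l}` and `ĵ > j*`, then there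
is an `l` with `j* ≤ l ≤ k` and `|p̂_l - p| ≥ κ_l / 2`. -/
theorem lepskii_event_inclusion
    (k : ℕ) (phat : ℕ → ℝ) (p : ℝ) (κ : ℕ → ℝ)
    (hphat : ∀ j, j ≤ k → phat j ∈ Set.Icc (0 : ℝ) 1)
    (hp : p ∈ Set.Icc (0 : ℝ) 1)
    (hκpos : ∀ j, j ≤ k → 0 < κ j)
    (hκmono : ∀ l j, l ≤ j → j ≤ k → κ l ≤ κ j)
    (jhat : ℕ)
    (hjhat : jhat = sInf {j : ℕ | j ≤ k ∧ ∀ l, j < l → l ≤ k → |phat j - phat l| < κ l})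
    (jstar : ℕ) (hjstar : jstar ≤ k)
    (hgt : jstar < jhat) :
    ∃ l, jstar ≤ l ∧ l ≤ k ∧ κ l / 2 ≤ |phat l - p| := by
  have hnotmem : jstar ∉ {j : ℕ | j ≤ k ∧ ∀ l, j < l → l ≤ k → |phat j - phat l| < κ l} := by
    intro hmem
    exact absurd (Nat.sInf_le hmem) (by omega)
  simp only [Set.mem_setOf_eq, not_and, not_forall] at hnotmem
  obtain ⟨l, hl1, hl2, hl3⟩ := hnotmem hjstar
  push_neg at hl3
  have htri : |phat jstar - phat l| ≤ |phat jstar - p| + |phat l - p| := by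
    have := abs_sub (phat jstar - p) (phat l - p)
    calc |phat jstar - phat l| = |(phat jstar - p) - (phat l - p)| := by ring_nf
    _ ≤ |phat jstar - p| + |phat l - p| := abs_sub _ _
  by_cases hcase : κ l / 2 ≤ |phat l - p|
  · exact ⟨l, le_of_lt hl1, hl2, hcase⟩
  · refine ⟨jstar, le_refl _, hjstar, ?_⟩
    have h1 : κ l / 2 ≤ |phat jstar - p| := by linarith
    have h2 : κ jstar ≤ κ l := hκmono jstar l (le_of_lt hl1) hl2
    linarith
end

section
/- Let (p̂_j)_{0≤j≤k} be [0,1]-valued random variables, p ∈ [0,1], κ_j > 0 increasing in j, and ĵ the Lepskii selector ĵ := min{j : ∀ l > j, |p̂_j - p̂_l| < κ_l}. Then for any fixed j* ≤ k, E[(p̂_ĵ - p)² 1_{ĵ > j*}] ≤ Σ_{l ≥ j*} P(|p̂_l - p| ≥ κ_l/2). -/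
/-!
If `ĵ > j*`, then `j*` was rejected by some `l ∈ (j*, k]`, i.e. `κ_l ≤ |p̂_{j*} - p̂_l|`; by the
triangle inequality and monotonicity of `κ`, either `p̂_l` or `p̂_{j*}` is off from `p` by at least
half its own threshold. So the bad event lies in `⋃_{l ∈ [j*, k]} {|p̂_l - p| ≥ κ_l / 2}`, the
integrand is at most its indicator since all values lie in `[0, 1]`, and a union bound concludes.
-/

open MeasureTheory

/-- The Lepskii selector is `ĵ = sInf (lepskiiAdmissible k p̂ κ)`; since `k` is always admissible,
the infimum is attained and `ĵ ≤ k`. -/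
def lepskiiAdmissible (k : ℕ) (x κ : ℕ → ℝ) : Set ℕ :=
  {j | j ≤ k ∧ ∀ l, j < l → l ≤ k → |x j - x l| < κ l}

lemma self_mem_lepskiiAdmissible (k : ℕ) (x κ : ℕ → ℝ) : k ∈ lepskiiAdmissible k x κ :=
  ⟨le_rfl, fun _ hkl hlk => absurd hkl hlk.not_gt⟩

lemma sInf_lepskiiAdmissible_le (k : ℕ) (x κ : ℕ → ℝ) : sInf (lepskiiAdmissible k x κ) ≤ k :=
  Nat.sInf_le (self_mem_lepskiiAdmissible k x κ)

lemma exists_le_abs_sub_of_lt_sInf_lepskiiAdmissible {k j : ℕ} {x κ : ℕ → ℝ}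
    (hj : j < sInf (lepskiiAdmissible k x κ)) : ∃ l, j < l ∧ l ≤ k ∧ κ l ≤ |x j - x l| := by
  have hjk : j ≤ k := (hj.trans_le (sInf_lepskiiAdmissible_le k x κ)).le
  have hnot : j ∉ lepskiiAdmissible k x κ := fun hmem => (Nat.sInf_le hmem).not_gt hj
  simpa [lepskiiAdmissible, hjk] using hnot

lemma exists_deviation_of_lt_sInf_lepskiiAdmissible {k j : ℕ} {x κ : ℕ → ℝ} (p : ℝ)
    (hκ : MonotoneOn κ (Set.Iic k)) (hj : j < sInf (lepskiiAdmissible k x κ)) :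
    ∃ l ∈ Finset.Icc j k, κ l / 2 ≤ |x l - p| := by
  obtain ⟨l, hjl, hlk, hrej⟩ := exists_le_abs_sub_of_lt_sInf_lepskiiAdmissible hj
  have htri : |x j - x l| ≤ |x j - p| + |x l - p| :=
    abs_sub_comm p (x l) ▸ abs_sub_le (x j) p (x l)
  by_cases hl : κ l / 2 ≤ |x l - p|
  · exact ⟨l, Finset.mem_Icc.2 ⟨hjl.le, hlk⟩, hl⟩
  · have hκjl : κ j ≤ κ l := hκ (hjl.le.trans hlk : j ≤ k) hlk hjl.le
    exact ⟨j, Finset.mem_Icc.2 ⟨le_rfl, hjl.le.trans hlk⟩, by linarith⟩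

lemma sq_sub_le_one_of_mem_Icc {x y : ℝ} (hx : x ∈ Set.Icc (0 : ℝ) 1)
    (hy : y ∈ Set.Icc (0 : ℝ) 1) : (x - y) ^ 2 ≤ 1 := by
  obtain ⟨hx0, hx1⟩ := hx
  obtain ⟨hy0, hy1⟩ := hy
  nlinarith

/-- No measurability of `f` or `s` is needed: a non-integrable `f` has integral `0`, and `s` can be
replaced by a measurable hull of the same measure. -/
lemma integral_le_measureReal_of_le_indicator {Ω : Type*} [MeasurableSpace Ω] {μ : Measure Ω}
    [IsFiniteMeasure μ] {f : Ω → ℝ} {s : Set Ω} (hf0 : 0 ≤ᵐ[μ] f)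
    (hf : f ≤ᵐ[μ] s.indicator 1) : ∫ ω, f ω ∂μ ≤ μ.real s := by
  have hs : MeasurableSet (toMeasurable μ s) := measurableSet_toMeasurable μ s
  calc ∫ ω, f ω ∂μ ≤ ∫ ω, (toMeasurable μ s).indicator 1 ω ∂μ := by
        refine integral_mono_of_nonneg hf0 ((integrable_const 1).indicator hs) ?_
        filter_upwards [hf] with ω hω
        exact hω.trans (Set.indicator_le_indicator_of_subset (subset_toMeasurable μ s)
          (fun _ => zero_le_one) ω)
    _ = μ.real s := by
        rw [integral_indicator_one hs, measureReal_def, measure_toMeasurable, ← measureReal_def]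

theorem lepskii_risk_bad_event_general
    {Ω : Type*} [MeasurableSpace Ω] (μ : Measure Ω) [IsProbabilityMeasure μ]
    (k : ℕ) (phat : ℕ → Ω → ℝ) (p : ℝ) (κ : ℕ → ℝ)
    (hval : ∀ j ω, j ≤ k → phat j ω ∈ Set.Icc (0 : ℝ) 1)
    (hp : p ∈ Set.Icc (0 : ℝ) 1)
    (hκmono : ∀ l j, l ≤ j → j ≤ k → κ l ≤ κ j)
    (jhat : Ω → ℕ)
    (hjhat : ∀ ω, jhat ω
      = sInf {j : ℕ | j ≤ k ∧ ∀ l, j < l → l ≤ k → |phat j ω - phat l ω| < κ l})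
    (jstar : ℕ) :
    ∫ ω, (if jstar < jhat ω then (phat (jhat ω) ω - p) ^ 2 else 0) ∂μ
      ≤ ∑ l ∈ Finset.Icc jstar k, (μ {ω | κ l / 2 ≤ |phat l ω - p|}).toReal := by
  have hjhat' (ω : Ω) : jhat ω = sInf (lepskiiAdmissible k (phat · ω) κ) := hjhat ω
  have hκ : MonotoneOn κ (Set.Iic k) := fun l _ j hj hlj => hκmono l j hlj hj
  set bad : ℕ → Set Ω := fun l => {ω | κ l / 2 ≤ |phat l ω - p|}
  have hbad : {ω | jstar < jhat ω} ⊆ ⋃ l ∈ Finset.Icc jstar k, bad l := by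
    intro ω (hω : jstar < jhat ω)
    rw [hjhat'] at hω
    obtain ⟨l, hl, hdev⟩ := exists_deviation_of_lt_sInf_lepskiiAdmissible p hκ hω
    exact Set.mem_biUnion hl hdev
  have hrisk : ∀ ω, (if jstar < jhat ω then (phat (jhat ω) ω - p) ^ 2 else 0)
      ≤ {ω | jstar < jhat ω}.indicator 1 ω := by
    intro ω
    by_cases h : jstar < jhat ω
    · have hjk : jhat ω ≤ k := hjhat' ω ▸ sInf_lepskiiAdmissible_le k _ κ
      simpa [h] using sq_sub_le_one_of_mem_Icc (hval _ ω hjk) hp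
    · simp [h]
  calc ∫ ω, (if jstar < jhat ω then (phat (jhat ω) ω - p) ^ 2 else 0) ∂μ
      ≤ μ.real {ω | jstar < jhat ω} :=
        integral_le_measureReal_of_le_indicator
          (Filter.Eventually.of_forall fun ω => by
            dsimp only [Pi.zero_apply]; split <;> positivity)
          (Filter.Eventually.of_forall hrisk)
    _ ≤ μ.real (⋃ l ∈ Finset.Icc jstar k, bad l) := measureReal_mono hbad (measure_ne_top μ _)
    _ ≤ _ := measureReal_biUnion_finset_le _ _

/-- Lepskii rule, probabilistic bound on the bad event: with `[0,1]`-valued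
estimators `p̂_j`, increasing penalties `κ_j > 0` and the Lepskii selector `ĵ`,
`E[(p̂_ĵ - p)² 1_{ĵ > j*}] ≤ Σ_{l ≥ j*} P(|p̂_l - p| ≥ κ_l/2)`. -/
theorem lepskii_risk_bad_event
    {Ω : Type*} [MeasurableSpace Ω] (μ : Measure Ω) [IsProbabilityMeasure μ]
    (k : ℕ) (phat : ℕ → Ω → ℝ) (p : ℝ) (κ : ℕ → ℝ)
    (hmeas : ∀ j, Measurable (phat j))
    (hval : ∀ j ω, j ≤ k → phat j ω ∈ Set.Icc (0 : ℝ) 1)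
    (hp : p ∈ Set.Icc (0 : ℝ) 1)
    (hκpos : ∀ j, j ≤ k → 0 < κ j)
    (hκmono : ∀ l j, l ≤ j → j ≤ k → κ l ≤ κ j)
    (jhat : Ω → ℕ)
    (hjhat : ∀ ω, jhat ω
      = sInf {j : ℕ | j ≤ k ∧ ∀ l, j < l → l ≤ k → |phat j ω - phat l ω| < κ l})
    (jstar : ℕ) (hjstar : jstar ≤ k) :
    ∫ ω, (if jstar < jhat ω then (phat (jhat ω) ω - p) ^ 2 else 0) ∂μ
      ≤ ∑ l ∈ Finset.Icc jstar k, (μ {ω | κ l / 2 ≤ |phat l ω - p|}).toReal :=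
  lepskii_risk_bad_event_general μ k phat p κ hval hp hκmono jhat hjhat jstar
end
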